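/- Let E^n be Euclidean n-space with its canonical distance. Then for every p > 1, every measure μ ∈ W_p(E^n) has a unique nearest Dirac measure; that is, reach({δ_z : z ∈ E^n} ⊆ W_p(E^n)) = ∞. More generally, the same holds for any Hadamard manifold (complete, simply connected Riemannian manifold of nonpositive sectional curvature). -/

import Mathlib

/-!
Since `W_p(μ, δ_z) = (∫ d(x, z)^p dμ)^{1/p}`, the nearest Dirac measures to `μ` are the
minimisers of the Fréchet function `F(z) = ∫ d(x, z)^p dμ`. In a CAT(0) space the midpoint `m`
of `y` and `z` satisfies `d(x, m)² ≤ (d(x, y)² + d(x, z)²)/2 - d(y, z)²/4` for every `x`; by strict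
convexity of `t ↦ t^p` this yields `d(x, m)^p ≤ (d(x, y)^p + d(x, z)^p)/2`, with a gap that is
uniform (by compactness) over `x` at bounded distance from `y` and `z` once `d(y, z) ≥ ε`.
By Markov's inequality such `x` carry half of the mass of `μ` when `F(y), F(z)` are bounded, so
`F` is uniformly convex on its sublevel sets. Hence minimising sequences are Cauchy, their limit
is a minimiser by Fatou's lemma, and two distinct minimisers would have a midpoint with a smaller
value. Euclidean space is CAT(0), with equality in the midpoint inequality.
-/

open MeasureTheory ENNReal Set

noncomputable section

/-- The set of couplings (transference plans) between two measures. -/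
def Couplings {X : Type*} [MeasurableSpace X] (μ ν : Measure X) :
    Set (Measure (X × X)) :=
  {π | π.map Prod.fst = μ ∧ π.map Prod.snd = ν}

/-- The `p`-Wasserstein (extended) distance between two measures. -/
def Wp {X : Type*} [PseudoEMetricSpace X] [MeasurableSpace X] (p : ℝ)
    (μ ν : Measure X) : ℝ≥0∞ :=
  (⨅ π ∈ Couplings μ ν, ∫⁻ z, edist z.1 z.2 ^ p ∂π) ^ (1 / p)

/-- The `p`-Wasserstein space: probability measures with finite `p`-th moment. -/
def WSpace (X : Type*) [PseudoEMetricSpace X] [MeasurableSpace X] (p : ℝ) :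
    Set (Measure X) :=
  {μ | IsProbabilityMeasure μ ∧ ∃ x₀ : X, ∫⁻ x, edist x x₀ ^ p ∂μ ≠ ⊤}

/-- The image of `X` in its Wasserstein space: the set of Dirac measures. -/
def Diracs (X : Type*) [MeasurableSpace X] : Set (Measure X) :=
  Set.range (Measure.dirac : X → Measure X)

/-- Distance from a point to a set, with respect to a distance function `ρ`. -/
def distToSet {Y : Type*} (ρ : Y → Y → ℝ≥0∞) (y : Y) (A : Set Y) : ℝ≥0∞ :=
  ⨅ a ∈ A, ρ y a

/-- `y` has a unique metric projection onto `A`. -/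
def HasUniqueProj {Y : Type*} (ρ : Y → Y → ℝ≥0∞) (A : Set Y) (y : Y) : Prop :=
  ∃! a, a ∈ A ∧ ρ y a = distToSet ρ y A

/-- The reach of `A` at `a ∈ A`, within the ambient set `S`: the supremum of radii `r`
such that every point of the ball `B_r(a) ∩ S` has a unique metric projection onto `A`. -/
def reachAt {Y : Type*} (ρ : Y → Y → ℝ≥0∞) (S A : Set Y) (a : Y) : ℝ≥0∞ :=
  sSup {r : ℝ≥0∞ | ∀ y ∈ S, ρ a y < r → HasUniqueProj ρ A y}

/-- The global reach of `A` within the ambient set `S`. -/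
def globalReach {Y : Type*} (ρ : Y → Y → ℝ≥0∞) (S A : Set Y) : ℝ≥0∞ :=
  ⨅ a ∈ A, reachAt ρ S A a

/-- A minimizing geodesic from `x` to `y`, parametrized proportionally on `[0,1]`. -/
def IsMinGeodesic {X : Type*} [PseudoMetricSpace X] (γ : ℝ → X) (x y : X) : Prop :=
  γ 0 = x ∧ γ 1 = y ∧
    ∀ s ∈ Set.Icc (0:ℝ) 1, ∀ t ∈ Set.Icc (0:ℝ) 1, dist (γ s) (γ t) = |s - t| * dist x y

/-- A geodesic metric space: any two points are joined by a minimizing geodesic. -/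
def IsGeodesicSpace (X : Type*) [PseudoMetricSpace X] : Prop :=
  ∀ x y : X, ∃ γ : ℝ → X, IsMinGeodesic γ x y

/-- `a` lies on some minimizing geodesic from `x` to `y`. -/
def OnMinGeodesic {X : Type*} [PseudoMetricSpace X] (a x y : X) : Prop :=
  ∃ γ : ℝ → X, ∃ t ∈ Set.Icc (0:ℝ) 1, IsMinGeodesic γ x y ∧ γ t = a

/-- A complete metric space is CAT(0) if for all `z, y` there is `m` such that for all `x`,
`d(x,m)² ≤ (d(x,y)² + d(x,z)²)/2 − d(y,z)²/4`.  A Hadamard manifold (complete simply connected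
Riemannian manifold of nonpositive sectional curvature), with its Riemannian distance, is
exactly a complete simply connected Riemannian manifold which is CAT(0). -/
def IsCAT0 (X : Type*) [MetricSpace X] : Prop :=
  ∀ z y : X, ∃ m : X, ∀ x : X,
    dist x m ^ 2 ≤ (dist x y ^ 2 + dist x z ^ 2) / 2 - dist y z ^ 2 / 4

open Filter Topology

section RealInequalities

variable {p a b c m : ℝ}

lemma le_add_div_two_of_sq_le (hm : 0 ≤ m) (hab : |a - b| ≤ c) (hc : c ≤ a + b)
    (hmsq : m ^ 2 ≤ (a ^ 2 + b ^ 2) / 2 - c ^ 2 / 4) : m ≤ (a + b) / 2 := by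
  have hsq : (a - b) ^ 2 ≤ c ^ 2 := sq_le_sq' (abs_le.1 hab).1 (abs_le.1 hab).2
  refine (pow_le_pow_iff_left₀ hm (by linarith [abs_nonneg (a - b)]) two_ne_zero).1 ?_
  linarith

lemma rpow_le_add_div_two_of_sq_le (hp : 1 ≤ p) (hm : 0 ≤ m) (hab : |a - b| ≤ c)
    (hc : c ≤ a + b) (hmsq : m ^ 2 ≤ (a ^ 2 + b ^ 2) / 2 - c ^ 2 / 4) :
    m ^ p ≤ (a ^ p + b ^ p) / 2 := by
  have ha : 0 ≤ a := by linarith [le_abs_self (a - b), neg_abs_le (a - b)]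
  have hb : 0 ≤ b := by linarith [le_abs_self (a - b), neg_abs_le (a - b)]
  calc m ^ p ≤ ((a + b) / 2) ^ p :=
        Real.rpow_le_rpow hm (le_add_div_two_of_sq_le hm hab hc hmsq) (by linarith)
    _ = ((1 / 2 : ℝ) • a + (1 / 2 : ℝ) • b) ^ p := by simp only [smul_eq_mul]; ring_nf
    _ ≤ (1 / 2 : ℝ) • a ^ p + (1 / 2 : ℝ) • b ^ p :=
        (convexOn_rpow hp).2 ha hb (by norm_num) (by norm_num) (by norm_num)
    _ = (a ^ p + b ^ p) / 2 := by simp only [smul_eq_mul]; ring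

lemma rpow_lt_add_div_two_of_sq_le (hp : 1 < p) (hm : 0 ≤ m) (hab : |a - b| ≤ c)
    (hc : c ≤ a + b) (hc₀ : 0 < c) (hmsq : m ^ 2 ≤ (a ^ 2 + b ^ 2) / 2 - c ^ 2 / 4) :
    m ^ p < (a ^ p + b ^ p) / 2 := by
  have ha : 0 ≤ a := by linarith [le_abs_self (a - b), neg_abs_le (a - b)]
  have hb : 0 ≤ b := by linarith [le_abs_self (a - b), neg_abs_le (a - b)]
  rcases eq_or_ne a b with rfl | hne
  · have hma : m < a := by nlinarith
    calc m ^ p < a ^ p := Real.rpow_lt_rpow hm hma (by linarith)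
      _ = (a ^ p + a ^ p) / 2 := by ring
  calc m ^ p ≤ ((a + b) / 2) ^ p :=
        Real.rpow_le_rpow hm (le_add_div_two_of_sq_le hm hab hc hmsq) (by linarith)
    _ = ((1 / 2 : ℝ) • a + (1 / 2 : ℝ) • b) ^ p := by simp only [smul_eq_mul]; ring_nf
    _ < (1 / 2 : ℝ) • a ^ p + (1 / 2 : ℝ) • b ^ p :=
        (strictConvexOn_rpow hp).2 ha hb hne (by norm_num) (by norm_num) (by norm_num)
    _ = (a ^ p + b ^ p) / 2 := by simp only [smul_eq_mul]; ring

lemma exists_pos_rpow_add_le_add_div_two_of_sq_le (hp : 1 < p) {ε : ℝ} (hε : 0 < ε) (R : ℝ) :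
    ∃ η > 0, ∀ a b c m : ℝ, a ≤ R → b ≤ R → ε ≤ c → |a - b| ≤ c → c ≤ a + b → 0 ≤ m →
      m ^ 2 ≤ (a ^ 2 + b ^ 2) / 2 - c ^ 2 / 4 → m ^ p + η ≤ (a ^ p + b ^ p) / 2 := by
  set K : Set (ℝ × ℝ × ℝ) := {q | q.1 ≤ R ∧ q.2.1 ≤ R ∧ ε ≤ q.2.2 ∧
    |q.1 - q.2.1| ≤ q.2.2 ∧ q.2.2 ≤ q.1 + q.2.1}
  have hK : IsCompact K := by
    refine (isCompact_Icc.prod (isCompact_Icc.prod isCompact_Icc)).of_isClosed_subset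
      (s := Icc 0 R ×ˢ Icc 0 R ×ˢ Icc 0 (2 * R)) ?_ ?_
    · simp only [K, ofPred_and]
      refine (isClosed_le ?_ ?_).inter <| (isClosed_le ?_ ?_).inter <| (isClosed_le ?_ ?_).inter <|
        (isClosed_le ?_ ?_).inter (isClosed_le ?_ ?_) <;> fun_prop
    · rintro ⟨a, b, c⟩ ⟨ha, hb, -, hab, hc⟩
      have := abs_le.1 hab
      exact ⟨⟨by linarith, ha⟩, ⟨by linarith, hb⟩, ⟨by linarith, by linarith⟩⟩
  -- the largest admissible `m` is the square root, so the gap is this continuous function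
  set gap : ℝ × ℝ × ℝ → ℝ := fun q => (q.1 ^ p + q.2.1 ^ p) / 2 -
    √((q.1 ^ 2 + q.2.1 ^ 2) / 2 - q.2.2 ^ 2 / 4) ^ p
  have hgap : Continuous gap := by
    have : Continuous fun x : ℝ => x ^ p := Real.continuous_rpow_const (by linarith)
    fun_prop
  obtain ⟨η, hη, hηK⟩ := hK.exists_forall_le' hgap.continuousOn (a := 0) <| by
    rintro ⟨a, b, c⟩ ⟨-, -, hεc, hab, hc⟩
    have harg : 0 ≤ (a ^ 2 + b ^ 2) / 2 - c ^ 2 / 4 := by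
      nlinarith [sq_nonneg (a - b), abs_nonneg (a - b)]
    simpa [gap, sub_pos] using rpow_lt_add_div_two_of_sq_le hp (Real.sqrt_nonneg _) hab hc
      (hε.trans_le hεc) (Real.sq_sqrt harg).le
  refine ⟨η, hη, fun a b c m ha hb hεc hab hc hm hmsq => ?_⟩
  have hmle : m ^ p ≤ √((a ^ 2 + b ^ 2) / 2 - c ^ 2 / 4) ^ p :=
    Real.rpow_le_rpow hm (Real.le_sqrt_of_sq_le hmsq) (by linarith)
  have := hηK (a, b, c) ⟨ha, hb, hεc, hab, hc⟩
  simp only [gap] at this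
  linarith

end RealInequalities

lemma abs_dist_sub_dist_le {X : Type*} [PseudoMetricSpace X] (x y z : X) :
    |dist x y - dist x z| ≤ dist y z := by
  simpa only [dist_comm x] using abs_dist_sub_le y z x

lemma edist_rpow_eq_ofReal {X : Type*} [PseudoMetricSpace X] {p : ℝ} (hp : 0 ≤ p) (x y : X) :
    edist x y ^ p = ENNReal.ofReal (dist x y ^ p) := by
  rw [edist_dist, ENNReal.ofReal_rpow_of_nonneg dist_nonneg hp]

def IsCAT0Midpoint {X : Type*} [PseudoMetricSpace X] (m y z : X) : Prop :=
  ∀ x, dist x m ^ 2 ≤ (dist x y ^ 2 + dist x z ^ 2) / 2 - dist y z ^ 2 / 4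

lemma IsCAT0.exists_isCAT0Midpoint {X : Type*} [MetricSpace X] (h : IsCAT0 X) (y z : X) :
    ∃ m, IsCAT0Midpoint m y z :=
  h z y

def frechetFunction {X : Type*} [PseudoEMetricSpace X] [MeasurableSpace X] (μ : Measure X)
    (p : ℝ) (z : X) : ℝ≥0∞ :=
  ∫⁻ x, edist x z ^ p ∂μ

section PseudoEMetric

variable {X : Type*} [PseudoEMetricSpace X] [MeasurableSpace X] [OpensMeasurableSpace X]
  {μ : Measure X} {p : ℝ}

lemma measurable_edist_rpow (p : ℝ) (z : X) : Measurable fun x => edist x z ^ p :=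
  (continuous_id.edist continuous_const).measurable.pow_const p

lemma frechetFunction_le_liminf {z : ℕ → X} {z₀ : X} (hz : Tendsto z atTop (𝓝 z₀)) :
    frechetFunction μ p z₀ ≤ liminf (fun k => frechetFunction μ p (z k)) atTop :=
  calc frechetFunction μ p z₀ = ∫⁻ x, liminf (fun k => edist x (z k) ^ p) atTop ∂μ :=
        lintegral_congr fun _ => (((ENNReal.continuous_rpow_const.tendsto _).comp
          (tendsto_const_nhds.edist hz)).liminf_eq).symm
    _ ≤ _ := lintegral_liminf_le fun k => measurable_edist_rpow p (z k)

end PseudoEMetric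

section PseudoMetric

variable {X : Type*} [PseudoMetricSpace X] [MeasurableSpace X] [OpensMeasurableSpace X]
  {μ : Measure X} {p : ℝ}

lemma IsCAT0Midpoint.frechetFunction_add_le {m y z : X} (hm : IsCAT0Midpoint m y z)
    (hp : 1 ≤ p) {η : ℝ} (hη : 0 ≤ η) {G : Set X} (hG : MeasurableSet G)
    (hgap : ∀ x ∈ G, dist x m ^ p + η ≤ (dist x y ^ p + dist x z ^ p) / 2) :
    frechetFunction μ p m + ENNReal.ofReal η * μ G ≤
      (frechetFunction μ p y + frechetFunction μ p z) / 2 := by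
  have hp₀ : 0 ≤ p := by linarith
  have hpt : ∀ x, edist x m ^ p + G.indicator (fun _ => ENNReal.ofReal η) x ≤
      (edist x y ^ p + edist x z ^ p) / 2 := by
    intro x
    simp only [edist_rpow_eq_ofReal hp₀]
    rw [← ENNReal.ofReal_add (by positivity) (by positivity), ← ENNReal.ofReal_ofNat 2,
      ← ENNReal.ofReal_div_of_pos two_pos]
    by_cases hx : x ∈ G
    · rw [indicator_of_mem hx, ← ENNReal.ofReal_add (by positivity) hη]
      exact ENNReal.ofReal_le_ofReal (hgap x hx)
    · rw [indicator_of_notMem hx, add_zero]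
      exact ENNReal.ofReal_le_ofReal <| rpow_le_add_div_two_of_sq_le hp
        dist_nonneg (abs_dist_sub_dist_le x y z) (dist_triangle_left y z x) (hm x)
  calc frechetFunction μ p m + ENNReal.ofReal η * μ G
      = ∫⁻ x, (edist x m ^ p + G.indicator (fun _ => ENNReal.ofReal η) x) ∂μ := by
        rw [lintegral_add_left (measurable_edist_rpow p m), lintegral_indicator_const hG]
        rfl
    _ ≤ ∫⁻ x, (edist x y ^ p + edist x z ^ p) / 2 ∂μ := lintegral_mono hpt
    _ = (frechetFunction μ p y + frechetFunction μ p z) / 2 := by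
        simp_rw [div_eq_mul_inv]
        rw [lintegral_mul_const' _ _ (by simp), lintegral_add_left (measurable_edist_rpow p y)]
        rfl

lemma exists_measure_lt_dist_le (hp : 0 < p) {B : ℝ≥0∞} (hB : B ≠ ⊤) {δ : ℝ≥0∞} (hδ : δ ≠ 0) :
    ∃ R : ℝ, ∀ y, frechetFunction μ p y ≤ B → μ {x | R < dist x y} ≤ δ := by
  set T := B / δ + 1
  have hT₀ : T ≠ 0 := by simp [T]
  have hT : T ≠ ⊤ := by simp [T, ENNReal.div_ne_top hB hδ]
  refine ⟨T.toReal ^ p⁻¹, fun y hy => ?_⟩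
  have hsub : {x | T.toReal ^ p⁻¹ < dist x y} ⊆ {x | T ≤ edist x y ^ p} := fun x hx => by
    have := (Real.rpow_inv_lt_iff_of_pos toReal_nonneg dist_nonneg hp).1 hx
    rw [mem_ofPred_eq, edist_rpow_eq_ofReal hp.le, ← ENNReal.ofReal_toReal hT]
    exact ENNReal.ofReal_le_ofReal this.le
  calc μ {x | T.toReal ^ p⁻¹ < dist x y} ≤ μ {x | T ≤ edist x y ^ p} := measure_mono hsub
    _ ≤ frechetFunction μ p y / T :=
        meas_ge_le_lintegral_div (measurable_edist_rpow p y).aemeasurable hT₀ hT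
    _ ≤ B / T := by gcongr
    _ ≤ δ := ENNReal.div_le_of_le_mul <| by
        rcases eq_or_ne δ ⊤ with rfl | hδ'
        · simp [ENNReal.top_mul hT₀]
        · calc B = δ * (B / δ) := (ENNReal.mul_div_cancel hδ hδ').symm
            _ ≤ δ * T := by gcongr; exact le_self_add

end PseudoMetric

section CAT0

variable {X : Type*} [MetricSpace X] [MeasurableSpace X] [OpensMeasurableSpace X]
  {μ : Measure X} {p : ℝ}

lemma IsCAT0.exists_pos_iInf_add_le_frechetFunction (hcat : IsCAT0 X) (hp : 1 < p)
    [IsProbabilityMeasure μ] {B : ℝ≥0∞} (hB : B ≠ ⊤) {ε : ℝ} (hε : 0 < ε) :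
    ∃ η : ℝ≥0∞, 0 < η ∧ η ≠ ⊤ ∧ ∀ y z, frechetFunction μ p y ≤ B →
      frechetFunction μ p z ≤ B → ε ≤ dist y z →
        (⨅ w, frechetFunction μ p w) + η ≤ (frechetFunction μ p y + frechetFunction μ p z) / 2 := by
  obtain ⟨R, hR⟩ :=
    exists_measure_lt_dist_le (μ := μ) (p := p) (by linarith) hB (δ := 2⁻¹ / 2) (by simp)
  obtain ⟨η, hη, hgap⟩ := exists_pos_rpow_add_le_add_div_two_of_sq_le hp hε R
  refine ⟨ENNReal.ofReal η / 2, by simpa using hη, ENNReal.div_ne_top ofReal_ne_top two_ne_zero,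
    fun y z hy hz hyz => ?_⟩
  obtain ⟨m, hm⟩ := hcat.exists_isCAT0Midpoint y z
  set G := Metric.closedBall y R ∩ Metric.closedBall z R
  have hGm : MeasurableSet G := measurableSet_closedBall.inter measurableSet_closedBall
  have hGc : μ Gᶜ ≤ 2⁻¹ := calc
    μ Gᶜ ≤ μ ({x | R < dist x y} ∪ {x | R < dist x z}) :=
        measure_mono fun x hx => by
          simpa only [G, compl_inter, mem_union, mem_compl_iff, Metric.mem_closedBall, not_le,
            mem_ofPred_eq] using hx
    _ ≤ 2⁻¹ / 2 + 2⁻¹ / 2 := (measure_union_le _ _).trans (add_le_add (hR y hy) (hR z hz))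
    _ = 2⁻¹ := ENNReal.add_halves _
  have hG : 2⁻¹ ≤ μ G := by
    rw [← compl_compl G, prob_compl_eq_one_sub hGm.compl, ← ENNReal.one_sub_inv_two]
    exact tsub_le_tsub_left hGc 1
  calc (⨅ w, frechetFunction μ p w) + ENNReal.ofReal η / 2
      ≤ frechetFunction μ p m + ENNReal.ofReal η * μ G := by
        rw [div_eq_mul_inv]
        gcongr
        exact iInf_le _ m
    _ ≤ _ := hm.frechetFunction_add_le hp.le hη.le hGm fun x hx =>
        hgap _ _ _ _ hx.1 hx.2 hyz (abs_dist_sub_dist_le x y z) (dist_triangle_left y z x)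
          dist_nonneg (hm x)

lemma IsCAT0.cauchySeq_of_tendsto_iInf_frechetFunction (hcat : IsCAT0 X) (hp : 1 < p)
    [IsProbabilityMeasure μ] (hV : ⨅ w, frechetFunction μ p w ≠ ⊤) {z : ℕ → X}
    (hz : Tendsto (fun k => frechetFunction μ p (z k)) atTop (𝓝 (⨅ w, frechetFunction μ p w))) :
    CauchySeq z := by
  set V := ⨅ w, frechetFunction μ p w
  rw [Metric.cauchySeq_iff]
  intro ε hε
  obtain ⟨η, hη₀, hη, hconv⟩ := hcat.exists_pos_iInf_add_le_frechetFunction (μ := μ) hp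
    (B := V + 1) (by finiteness) hε
  have hnear : ∀ᶠ k in atTop, frechetFunction μ p (z k) ≤ V + 1 ∧
      frechetFunction μ p (z k) ≤ V + η / 2 :=
    (hz.eventually_le_const (ENNReal.lt_add_right hV one_ne_zero)).and
      (hz.eventually_le_const (ENNReal.lt_add_right hV (by simpa using hη₀.ne')))
  obtain ⟨N, hN⟩ := eventually_atTop.1 hnear
  refine ⟨N, fun j hj k hk => not_le.1 fun hjk => ?_⟩
  have hle : V + η ≤ V + η / 2 :=
    calc V + η ≤ (frechetFunction μ p (z j) + frechetFunction μ p (z k)) / 2 :=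
          hconv _ _ (hN j hj).1 (hN k hk).1 hjk
      _ ≤ (V + η / 2 + (V + η / 2)) / 2 := by
          gcongr
          exacts [(hN j hj).2, (hN k hk).2]
      _ = V + η / 2 := by rw [ENNReal.add_div, ENNReal.add_halves]
  exact (ENNReal.half_lt_self hη₀.ne' hη).not_ge ((ENNReal.add_le_add_iff_left hV).1 hle)

theorem IsCAT0.existsUnique_forall_frechetFunction_le [CompleteSpace X] (hcat : IsCAT0 X)
    (hp : 1 < p) [IsProbabilityMeasure μ] {x₀ : X} (hx₀ : frechetFunction μ p x₀ ≠ ⊤) :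
    ∃! z, ∀ w, frechetFunction μ p z ≤ frechetFunction μ p w := by
  have hV : ⨅ w, frechetFunction μ p w ≠ ⊤ := ne_top_of_le_ne_top hx₀ (iInf_le _ x₀)
  obtain ⟨u, -, hu, hmem⟩ :=
    exists_seq_tendsto_sInf ⟨_, mem_range_self x₀⟩ (OrderBot.bddBelow (range (frechetFunction μ p)))
  choose z hz using hmem
  rw [sInf_range, ← funext hz] at hu
  obtain ⟨z₀, hz₀⟩ :=
    cauchySeq_tendsto_of_complete (hcat.cauchySeq_of_tendsto_iInf_frechetFunction hp hV hu)
  have hmin : ∀ w, frechetFunction μ p z₀ ≤ frechetFunction μ p w := fun w =>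
    (frechetFunction_le_liminf hz₀).trans_eq hu.liminf_eq |>.trans (iInf_le _ w)
  refine ⟨z₀, hmin, fun y hy => not_not.1 fun hne => ?_⟩
  obtain ⟨η, hη₀, -, hconv⟩ :=
    hcat.exists_pos_iInf_add_le_frechetFunction (μ := μ) hp hx₀ (dist_pos.2 hne)
  have hFy : frechetFunction μ p y = ⨅ w, frechetFunction μ p w :=
    le_antisymm (le_iInf hy) (iInf_le _ y)
  have hFz₀ : frechetFunction μ p z₀ = ⨅ w, frechetFunction μ p w :=
    le_antisymm (le_iInf hmin) (iInf_le _ z₀)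
  have := hconv y z₀ (hy x₀) (hmin x₀) le_rfl
  rw [hFy, hFz₀, ENNReal.add_div, ENNReal.add_halves] at this
  exact (ENNReal.lt_add_right hV hη₀.ne').not_ge this

end CAT0

lemma prod_dirac_mem_couplings {X : Type*} [MeasurableSpace X] (μ : Measure X)
    [IsProbabilityMeasure μ] (z : X) :
    μ.prod (Measure.dirac z) ∈ Couplings μ (Measure.dirac z) := by
  simp [Couplings]

section Wasserstein

variable {X : Type*} [MetricSpace X] [MeasurableSpace X] [OpensMeasurableSpace X]
  {μ : Measure X} {p : ℝ}

lemma lintegral_edist_rpow_of_mem_couplings_dirac {z : X} {π : Measure (X × X)}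
    (hπ : π ∈ Couplings μ (Measure.dirac z)) :
    ∫⁻ w, edist w.1 w.2 ^ p ∂π = frechetFunction μ p z := by
  have hsnd : ∀ᵐ w ∂π, w.2 = z := ae_of_ae_map measurable_snd.aemeasurable <| by
    rw [hπ.2]
    exact (ae_dirac_iff (measurableSet_singleton z)).2 rfl
  rw [lintegral_congr_ae (g := fun w => edist w.1 z ^ p) (hsnd.mono fun w hw => by rw [hw]),
    ← lintegral_map (measurable_edist_rpow p z) measurable_fst, hπ.1]
  rfl

lemma Wp_dirac (p : ℝ) (μ : Measure X) [IsProbabilityMeasure μ] (z : X) :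
    Wp p μ (Measure.dirac z) = frechetFunction μ p z ^ (1 / p) := by
  unfold Wp
  congr 1
  exact le_antisymm
    (iInf₂_le_of_le _ (prod_dirac_mem_couplings μ z)
      (lintegral_edist_rpow_of_mem_couplings_dirac (prod_dirac_mem_couplings μ z)).le)
    (le_iInf₂ fun _ hπ => (lintegral_edist_rpow_of_mem_couplings_dirac hπ).ge)

end Wasserstein

lemma hasUniqueProj_range_of_existsUnique {Z Y : Type*} {ρ : Y → Y → ℝ≥0∞} {f : Z → Y} {y : Y}
    (h : ∃! z, ∀ w, ρ y (f z) ≤ ρ y (f w)) : HasUniqueProj ρ (range f) y := by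
  have hmin : ∀ z, ρ y (f z) = distToSet ρ y (range f) ↔ ∀ w, ρ y (f z) ≤ ρ y (f w) := fun z => by
    rw [distToSet, iInf_range, le_antisymm_iff, and_iff_left (iInf_le _ z), le_iInf_iff]
  obtain ⟨z, hz, huniq⟩ := h
  refine ⟨f z, ⟨mem_range_self z, (hmin z).2 hz⟩, ?_⟩
  rintro _ ⟨⟨w, rfl⟩, hw⟩
  exact congrArg f (huniq w ((hmin w).1 hw))

lemma globalReach_eq_top_of_forall_hasUniqueProj {Y : Type*} {ρ : Y → Y → ℝ≥0∞} {S A : Set Y}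
    (h : ∀ y ∈ S, HasUniqueProj ρ A y) : globalReach ρ S A = ⊤ :=
  eq_top_iff.2 <| le_iInf₂ fun _ _ => le_sSup fun y hy _ => h y hy

lemma IsCAT0.hasUniqueProj_diracs {X : Type*} [MetricSpace X] [CompleteSpace X]
    [MeasurableSpace X] [OpensMeasurableSpace X] (hcat : IsCAT0 X) {p : ℝ} (hp : 1 < p) :
    ∀ μ ∈ WSpace X p, HasUniqueProj (Wp p) (Diracs X) μ := by
  rintro μ ⟨hμ, x₀, hx₀⟩
  apply hasUniqueProj_range_of_existsUnique
  simp_rw [Wp_dirac, ENNReal.rpow_le_rpow_iff (one_div_pos.2 (zero_lt_one.trans hp))]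
  exact hcat.existsUnique_forall_frechetFunction_le hp hx₀

lemma isCAT0_of_innerProductSpace {E : Type*} [NormedAddCommGroup E] [InnerProductSpace ℝ E] :
    IsCAT0 E := fun z y => ⟨midpoint ℝ y z, fun x => le_of_eq <| by
  simp only [dist_eq_norm, midpoint_eq_smul_add, ← real_inner_self_eq_norm_sq, inner_sub_left,
    inner_sub_right, inner_smul_left, inner_smul_right, inner_add_left, inner_add_right,
    real_inner_comm x]
  simp
  ring⟩

open scoped Manifold in
/-- For every `p > 1`, every measure in `W_p(𝔼ⁿ)` over Euclidean `n`-space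
has a unique nearest Dirac measure, i.e. the reach of the Dirac embedding
`𝔼ⁿ ↪ W_p(𝔼ⁿ)` is infinite; more generally the same holds for any Hadamard manifold
(complete, simply connected manifold whose Riemannian distance is nonpositively curved,
i.e. CAT(0)). -/
theorem reach_infinite_euclidean_and_hadamard {n : ℕ} :
    ∀ p : ℝ, 1 < p →
      ((∀ μ ∈ WSpace (EuclideanSpace ℝ (Fin n)) p,
          HasUniqueProj (Wp p) (Diracs (EuclideanSpace ℝ (Fin n))) μ) ∧
        globalReach (Wp p) (WSpace (EuclideanSpace ℝ (Fin n)) p)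
          (Diracs (EuclideanSpace ℝ (Fin n))) = ⊤) ∧
      (∀ (m : ℕ) (M : Type) [MetricSpace M] [CompleteSpace M] [SimplyConnectedSpace M]
          [MeasurableSpace M] [BorelSpace M]
          [ChartedSpace (EuclideanSpace ℝ (Fin m)) M] [IsManifold (𝓡 m) (⊤ : ℕ∞) M],
          IsGeodesicSpace M → IsCAT0 M →
          (∀ μ ∈ WSpace M p, HasUniqueProj (Wp p) (Diracs M) μ) ∧
          globalReach (Wp p) (WSpace M p) (Diracs M) = ⊤) := by
  intro p hp
  have hcat_reach : ∀ (X : Type) [MetricSpace X] [CompleteSpace X] [MeasurableSpace X]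
      [OpensMeasurableSpace X], IsCAT0 X → (∀ μ ∈ WSpace X p, HasUniqueProj (Wp p) (Diracs X) μ) ∧
        globalReach (Wp p) (WSpace X p) (Diracs X) = ⊤ := fun X _ _ _ _ hcat =>
    ⟨hcat.hasUniqueProj_diracs hp,
      globalReach_eq_top_of_forall_hasUniqueProj (hcat.hasUniqueProj_diracs hp)⟩
  exact ⟨hcat_reach _ isCAT0_of_innerProductSpace, fun m M _ _ _ _ _ _ _ _ hcat =>
    hcat_reach M hcat⟩
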